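/- arXiv:1703.06685 — 2 statements merged into one kernel-verified Lean document; each statement's English description precedes it below -/
import Mathlib

section
/- The functor F maps every 0-fixed object of 𝒜 to a 0-cofixed object of ℬ, the functor G maps every 0-cofixed object of ℬ to a 0-fixed object of 𝒜, and the restrictions of F and G to the full subcategories Fix₀(𝒜) and coFix₀(ℬ) form an adjoint equivalence of categories (the unit η_A is an isomorphism for every A in Fix₀(𝒜) and the counit ε_B is an isomorphism for every B in coFix₀(ℬ)). -/
open CategoryTheory CategoryTheory.Limits

universe v u v' u'

variable {𝒜 : Type u} [Category.{v} 𝒜] {ℬ : Type u'} [Category.{v'} ℬ]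
  [Abelian 𝒜] [EnoughProjectives 𝒜] [Abelian ℬ] [EnoughInjectives ℬ]

/-- An object `A` of `𝒜` is *0-fixed* with respect to the adjunction `adj : F ⊣ G` if
`LᵢF(A) = 0` for all `i > 0`, `RⁱG(F A) = 0` for all `i > 0`, and the unit
`η_A : A ⟶ G (F A)` is an isomorphism. -/
def IsFixed0 (F : 𝒜 ⥤ ℬ) (G : ℬ ⥤ 𝒜) [F.Additive] [G.Additive]
    (adj : F ⊣ G) (A : 𝒜) : Prop :=
  (∀ i : ℕ, 0 < i → IsZero ((F.leftDerived i).obj A)) ∧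
  (∀ i : ℕ, 0 < i → IsZero ((G.rightDerived i).obj (F.obj A))) ∧
  IsIso (adj.unit.app A)

/-- An object `B` of `ℬ` is *0-cofixed* with respect to the adjunction `adj : F ⊣ G` if
`RⁱG(B) = 0` for all `i > 0`, `LᵢF(G B) = 0` for all `i > 0`, and the counit
`ε_B : F (G B) ⟶ B` is an isomorphism. -/
def IsCofixed0 (F : 𝒜 ⥤ ℬ) (G : ℬ ⥤ 𝒜) [F.Additive] [G.Additive]
    (adj : F ⊣ G) (B : ℬ) : Prop :=
  (∀ i : ℕ, 0 < i → IsZero ((G.rightDerived i).obj B)) ∧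
  (∀ i : ℕ, 0 < i → IsZero ((F.leftDerived i).obj (G.obj B))) ∧
  IsIso (adj.counit.app B)

/-! Along the isomorphism `η_A : A ≅ G (F A)` the vanishing of `LᵢF` passes from `A` to
`G (F A)`, and the triangle identity `F η_A ≫ ε_{F A} = 𝟙` makes `ε_{F A}` invertible
once `F η_A` is; the statement for `G` on `0`-cofixed objects is dual. -/

namespace CategoryTheory.Adjunction

variable {C D : Type*} [Category C] [Category D] {F : C ⥤ D} {G : D ⥤ C} (adj : F ⊣ G)

lemma isIso_counit_app_obj_of_isIso_unit_app {A : C} [IsIso (adj.unit.app A)] :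
    IsIso (adj.counit.app (F.obj A)) :=
  isIso_of_hom_comp_eq_id _ (adj.left_triangle_components A)

lemma isIso_unit_app_obj_of_isIso_counit_app {B : D} [IsIso (adj.counit.app B)] :
    IsIso (adj.unit.app (G.obj B)) :=
  isIso_of_comp_hom_eq_id _ (adj.right_triangle_components B)

end CategoryTheory.Adjunction

section

variable (F : 𝒜 ⥤ ℬ) (G : ℬ ⥤ 𝒜) [F.Additive] [G.Additive] (adj : F ⊣ G)

theorem isCofixed0_obj_of_isFixed0 {A : 𝒜} (hA : IsFixed0 F G adj A) :
    IsCofixed0 F G adj (F.obj A) := by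
  obtain ⟨hLF, hRG, hη⟩ := hA
  exact ⟨hRG,
    fun i hi => (hLF i hi).of_iso ((F.leftDerived i).mapIso (asIso (adj.unit.app A)).symm),
    adj.isIso_counit_app_obj_of_isIso_unit_app⟩

theorem isFixed0_obj_of_isCofixed0 {B : ℬ} (hB : IsCofixed0 F G adj B) :
    IsFixed0 F G adj (G.obj B) := by
  obtain ⟨hRG, hLF, hε⟩ := hB
  exact ⟨hLF,
    fun i hi => (hRG i hi).of_iso ((G.rightDerived i).mapIso (asIso (adj.counit.app B))),
    adj.isIso_unit_app_obj_of_isIso_counit_app⟩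

end

/-- **Theorem.** `F` maps every `0`-fixed object of `𝒜` to a `0`-cofixed object of `ℬ`,
`G` maps every `0`-cofixed object of `ℬ` to a `0`-fixed object of `𝒜`, and the restrictions
of `F` and `G` to `Fix₀(𝒜)` and `coFix₀(ℬ)` form an adjoint equivalence: the unit `η_A` is an
isomorphism for every `A ∈ Fix₀(𝒜)` and the counit `ε_B` is an isomorphism for every
`B ∈ coFix₀(ℬ)`. -/
theorem stmt4 (F : 𝒜 ⥤ ℬ) (G : ℬ ⥤ 𝒜) [F.Additive] [G.Additive] (adj : F ⊣ G) :
    (∀ A : 𝒜, IsFixed0 F G adj A → IsCofixed0 F G adj (F.obj A)) ∧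
    (∀ B : ℬ, IsCofixed0 F G adj B → IsFixed0 F G adj (G.obj B)) ∧
    (∀ A : 𝒜, IsFixed0 F G adj A → IsIso (adj.unit.app A)) ∧
    (∀ B : ℬ, IsCofixed0 F G adj B → IsIso (adj.counit.app B)) :=
  ⟨fun _ => isCofixed0_obj_of_isFixed0 F G adj, fun _ => isFixed0_obj_of_isCofixed0 F G adj,
    fun _ hA => hA.2.2, fun _ hB => hB.2.2⟩
end

section
/- Let (R, m, k) be a commutative noetherian local ring which is m-adically complete, and let E be an injective hull of k over R. Then: (1) for every finitely generated R-module M, the R-module Hom_R(M, E) is Artinian; (2) for every Artinian R-module N, the R-module Hom_R(N, E) is finitely generated; and (3) for every R-module M that is finitely generated or Artinian, the canonical evaluation map M → Hom_R(Hom_R(M, E), E), sending m to the map φ ↦ φ(m), is an isomorphism. Hence Hom_R(−, E) gives a duality between the category of finitely generated R-modules and the category of Artinian R-modules. -/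
/-!
Everything rests on the fact that `R → End_R(E)` is surjective. The socle of `E` is `k`, so
`Hom(k, E) ≅ k` and biduality holds for `k`, hence by induction on the length for every module
of finite length, in particular for `R ⧸ 𝔪 ^ t`. Evaluating at `1` identifies `Hom(R ⧸ 𝔪 ^ t, E)`
with the submodule `E_t` of `E` killed by `𝔪 ^ t`, so every map `E_t → E` is multiplication by
some `r_t`. The annihilator of `E_t` is `𝔪 ^ t`, so `(r_t)` is Cauchy and has a limit `r` by
completeness; since `E` is the union of the `E_t` (Krull's intersection theorem and the
essentiality of `k`), an endomorphism of `E` is multiplication by `r`.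

Then biduality holds for `R` and for `E`, and it passes to finite products, to quotients, and,
`E` being an injective cogenerator, to submodules: hence to finitely generated modules
(quotients of `R ^ n`) and to Artinian modules (submodules of some `E ^ n`). Finally `E` is
Artinian, because `N ↦ ann N` is injective on its submodules, which gives (1), and (2) follows
from `Hom(E ^ n, E) ≅ R ^ n` and the injectivity of `E`.
-/

universe u

/-- The canonical evaluation (biduality) map `M → Hom_R(Hom_R(M, E), E)`,
sending `m` to the map `φ ↦ φ(m)`. -/
noncomputable def bidualityMap (R : Type u) [CommRing R] (M : Type u) [AddCommGroup M]
    [Module R M] (E : Type u) [AddCommGroup E] [Module R E] :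
    M →ₗ[R] ((M →ₗ[R] E) →ₗ[R] E) :=
  (LinearMap.id : (M →ₗ[R] E) →ₗ[R] (M →ₗ[R] E)).flip

open IsLocalRing LinearMap

def IsCogenerator (R : Type u) [CommRing R] (E : Type u) [AddCommGroup E] [Module R E] :
    Prop :=
  ∀ (N : Type u) [AddCommGroup N] [Module R N] (x : N), x ≠ 0 → ∃ φ : N →ₗ[R] E, φ x ≠ 0

section InjectiveCogenerator

variable {R : Type u} [CommRing R] {E : Type u} [AddCommGroup E] [Module R E]
  {M : Type u} [AddCommGroup M] [Module R M]

@[simp]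
theorem bidualityMap_apply (x : M) (φ : M →ₗ[R] E) : bidualityMap R M E x φ = φ x := rfl

theorem bidualityMap_injective (hc : IsCogenerator R E) :
    Function.Injective (bidualityMap R M E) := by
  refine (injective_iff_map_eq_zero _).mpr fun x hx => ?_
  by_contra hx0
  obtain ⟨φ, hφ⟩ := hc M x hx0
  exact hφ (by simpa using LinearMap.congr_fun hx φ)

theorem bidualityMap_surjective_of_surjective (hE : Module.Injective R E)
    {X : Type u} [AddCommGroup X] [Module R X] (hX : Function.Surjective (bidualityMap R X E))
    (p : X →ₗ[R] M) (hp : Function.Surjective p) :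
    Function.Surjective (bidualityMap R M E) := by
  intro F
  have hpinj : Function.Injective (lcomp R E p) := fun φ ψ h =>
    LinearMap.ext fun y => by
      obtain ⟨x, rfl⟩ := hp y
      exact LinearMap.congr_fun h x
  obtain ⟨G, hG⟩ := hE.out _ hpinj F
  obtain ⟨x, rfl⟩ := hX G
  exact ⟨p x, LinearMap.ext fun φ => hG φ⟩

theorem bidualityMap_surjective_of_injective (hE : Module.Injective R E)
    (hc : IsCogenerator R E) {X : Type u} [AddCommGroup X] [Module R X]
    (hX : Function.Surjective (bidualityMap R X E)) (j : M →ₗ[R] X) (hj : Function.Injective j) :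
    Function.Surjective (bidualityMap R M E) := by
  intro F
  obtain ⟨y, hy⟩ := hX (F ∘ₗ lcomp R E j)
  have hFj (ψ : X →ₗ[R] E) : F (ψ ∘ₗ j) = ψ y := (LinearMap.congr_fun hy ψ).symm
  obtain ⟨x, rfl⟩ : y ∈ range j := by
    by_contra hy
    obtain ⟨ψ, hψ⟩ := hc _ ((range j).mkQ y) (by simpa using hy)
    have hψj : (ψ ∘ₗ (range j).mkQ) ∘ₗ j = 0 := by
      ext x; simp [(Submodule.Quotient.mk_eq_zero _).mpr (mem_range_self j x)]
    exact hψ (by simpa [hψj] using (hFj (ψ ∘ₗ (range j).mkQ)).symm)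
  refine ⟨x, LinearMap.ext fun φ => ?_⟩
  obtain ⟨ψ, hψ⟩ := hE.out j hj φ
  have : ψ ∘ₗ j = φ := LinearMap.ext hψ
  simp [← this, hFj]

theorem bidualityMap_surjective_pi {ι : Type u} [Fintype ι] [DecidableEq ι] {M : ι → Type u}
    [∀ i, AddCommGroup (M i)] [∀ i, Module R (M i)]
    (hM : ∀ i, Function.Surjective (bidualityMap R (M i) E)) :
    Function.Surjective (bidualityMap R (∀ i, M i) E) := by
  intro F
  choose x hx using fun i => hM i (F ∘ₗ lcomp R E (LinearMap.proj i))
  refine ⟨x, LinearMap.ext fun φ => ?_⟩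
  have hsum (z : ∀ i, M i) : φ z = ∑ i, φ (Pi.single i (z i)) := by
    rw [← map_sum, Finset.univ_sum_single]
  calc φ x = ∑ i, F ((φ ∘ₗ LinearMap.single R M i) ∘ₗ LinearMap.proj i) := by
        rw [hsum x]
        exact Finset.sum_congr rfl fun i _ =>
          LinearMap.congr_fun (hx i) (φ ∘ₗ LinearMap.single R M i)
    _ = F φ := by
        rw [← map_sum]
        congr 1
        exact LinearMap.ext fun z => by simp [hsum z]

theorem exists_comp_eq_of_surjective {X Y Z : Type u} [AddCommGroup X] [Module R X]
    [AddCommGroup Y] [Module R Y] [AddCommGroup Z] [Module R Z] {p : X →ₗ[R] Y}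
    (hp : Function.Surjective p) {g : X →ₗ[R] Z} (h : ker p ≤ ker g) :
    ∃ g' : Y →ₗ[R] Z, g' ∘ₗ p = g :=
  ⟨(ker p).liftQ g h ∘ₗ (p.quotKerEquivOfSurjective hp).symm, LinearMap.ext fun x => by simp⟩

theorem bidualityMap_surjective_of_quotient (hE : Module.Injective R E) (S : Submodule R M)
    (hS : Function.Surjective (bidualityMap R S E))
    (hQ : Function.Surjective (bidualityMap R (M ⧸ S) E)) :
    Function.Surjective (bidualityMap R M E) := by
  intro F
  obtain ⟨q, hq⟩ := hQ (F ∘ₗ lcomp R E S.mkQ)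
  obtain ⟨x, rfl⟩ := S.mkQ_surjective q
  have hres : Function.Surjective (lcomp R E S.subtype) := fun ψ =>
    let ⟨φ, hφ⟩ := hE.out S.subtype Subtype.val_injective ψ
    ⟨φ, LinearMap.ext hφ⟩
  have hker : ker (lcomp R E S.subtype) ≤ ker (F - bidualityMap R M E x) := fun φ hφ => by
    have hφS : S ≤ ker φ := fun s hs => LinearMap.congr_fun hφ ⟨s, hs⟩
    have := LinearMap.congr_fun hq (S.liftQ φ hφS)
    simp only [bidualityMap_apply, comp_apply, lcomp_apply', Submodule.liftQ_mkQ,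
      Submodule.mkQ_apply, Submodule.liftQ_apply] at this
    simp [this]
  obtain ⟨G, hG⟩ := exists_comp_eq_of_surjective hres hker
  obtain ⟨s, rfl⟩ := hS G
  refine ⟨x + s, LinearMap.ext fun φ => ?_⟩
  have := LinearMap.congr_fun hG φ
  simp only [LinearMap.comp_apply, bidualityMap_apply, lcomp_apply', LinearMap.sub_apply,
    Submodule.subtype_apply] at this
  simp [this]

theorem exists_injective_pi_of_isArtinian (hc : IsCogenerator R E) [IsArtinian R M] :
    ∃ s : Finset (M →ₗ[R] E),
      Function.Injective (LinearMap.pi fun φ : s => (φ : M →ₗ[R] E)) := by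
  classical
  set K : Finset (M →ₗ[R] E) → Submodule R M := fun s => ker (LinearMap.pi fun φ : s => φ.1)
  have hK (s : Finset (M →ₗ[R] E)) (x : M) : x ∈ K s ↔ ∀ φ ∈ s, φ x = 0 := by
    simp [K, funext_iff]
  obtain ⟨_, ⟨s, rfl⟩, hmin⟩ := IsArtinian.set_has_minimal (Set.range K) (Set.range_nonempty _)
  refine ⟨s, (injective_iff_map_eq_zero _).mpr fun x hx => ?_⟩
  by_contra hx0
  obtain ⟨φ, hφ⟩ := hc M x hx0
  refine hmin (K (insert φ s)) ⟨_, rfl⟩ (lt_of_le_of_ne ?_ fun h => ?_)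
  · exact fun y hy => (hK _ y).mpr fun ψ hψ => (hK _ y).mp hy ψ (Finset.mem_insert_of_mem hψ)
  · exact hφ ((hK _ x).mp (h ▸ hx) φ (Finset.mem_insert_self φ s))

theorem apply_mk_one_mem_torsionBySet {I : Ideal R} (ψ : R ⧸ I →ₗ[R] E) :
    ψ (Submodule.Quotient.mk 1) ∈ Submodule.torsionBySet R E I :=
  (Submodule.mem_torsionBySet_iff _ _).mpr fun a => by
    rw [← map_smul, ← Submodule.Quotient.mk_smul, smul_eq_mul, mul_one,
      (Submodule.Quotient.mk_eq_zero _).mpr a.2, map_zero]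

theorem annihilator_torsionBySet_le (hc : IsCogenerator R E) (I : Ideal R) :
    (Submodule.torsionBySet R E I).annihilator ≤ I := fun r hr => by
  by_contra hrI
  obtain ⟨ψ, hψ⟩ := hc (R ⧸ I) (Submodule.Quotient.mk r)
    (by rwa [Ne, Submodule.Quotient.mk_eq_zero])
  refine hψ ?_
  rw [← mul_one r, ← smul_eq_mul, Submodule.Quotient.mk_smul, map_smul]
  exact Submodule.mem_annihilator.mp hr _ (apply_mk_one_mem_torsionBySet ψ)

theorem exists_mem_annihilator_smul_ne_zero (hc : IsCogenerator R E)
    (hs : Function.Surjective (lsmul R E)) {N : Submodule R E} {x : E} (hx : x ∉ N) :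
    ∃ r ∈ N.annihilator, r • x ≠ 0 := by
  obtain ⟨ψ, hψ⟩ := hc (E ⧸ N) (N.mkQ x) (by simpa using hx)
  obtain ⟨r, hr⟩ := hs (ψ ∘ₗ N.mkQ)
  have hr' (y : E) : r • y = ψ (N.mkQ y) := LinearMap.congr_fun hr y
  refine ⟨r, Submodule.mem_annihilator.mpr fun n hn => ?_, by rwa [hr']⟩
  rw [hr', Submodule.mkQ_apply, (Submodule.Quotient.mk_eq_zero N).mpr hn, map_zero]

theorem isArtinian_of_lsmul_surjective [IsNoetherianRing R] (hc : IsCogenerator R E)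
    (hs : Function.Surjective (lsmul R E)) : IsArtinian R E := by
  refine StrictAnti.wellFoundedLT (f := Submodule.annihilator) fun N N' hlt => ?_
  refine lt_of_le_of_ne (Submodule.annihilator_mono hlt.le) fun h => ?_
  obtain ⟨x, hxN', hxN⟩ := SetLike.exists_of_lt hlt
  obtain ⟨r, hr, hrx⟩ := exists_mem_annihilator_smul_ne_zero hc hs hxN
  exact hrx (Submodule.mem_annihilator.mp (h ▸ hr) x hxN')

theorem isArtinian_linearMap_of_finite [IsArtinian R E] [Module.Finite R M] :
    IsArtinian R (M →ₗ[R] E) := by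
  classical
  obtain ⟨s, hs⟩ := Module.Finite.fg_top (R := R) (M := M)
  refine isArtinian_of_injective (LinearMap.pi fun x : s => LinearMap.applyₗ (R := R) x.1) ?_
  refine (injective_iff_map_eq_zero _).mpr fun φ hφ => LinearMap.ext_on hs fun x hx => ?_
  simpa using congr_fun hφ ⟨x, hx⟩

theorem finite_linearMap_of_isArtinian (hE : Module.Injective R E) (hc : IsCogenerator R E)
    (hs : Function.Surjective (lsmul R E)) [IsArtinian R M] : Module.Finite R (M →ₗ[R] E) := by
  classical
  obtain ⟨s, hj⟩ := exists_injective_pi_of_isArtinian hc (M := M)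
  have : Module.Finite R (E →ₗ[R] E) := Module.Finite.of_surjective _ hs
  have : Module.Finite R ((s → E) →ₗ[R] E) :=
    Module.Finite.equiv (LinearMap.lsum R (fun _ : s => E) R)
  refine Module.Finite.of_surjective (lcomp R E (LinearMap.pi fun φ : s => φ.1)) fun φ => ?_
  obtain ⟨ψ, hψ⟩ := hE.out _ hj φ
  exact ⟨ψ, LinearMap.ext hψ⟩

theorem bidualityMap_self_surjective (hs : Function.Surjective (lsmul R E)) :
    Function.Surjective (bidualityMap R E E) := fun F =>
  ⟨F LinearMap.id, LinearMap.ext fun φ => by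
    obtain ⟨r, rfl⟩ := hs φ
    rw [bidualityMap_apply, lsmul_apply, ← map_smul]
    rfl⟩

theorem bidualityMap_ring_surjective (hs : Function.Surjective (lsmul R E)) :
    Function.Surjective (bidualityMap R R E) := fun F => by
  obtain ⟨r, hr⟩ := hs (F ∘ₗ (ringLmapEquivSelf R R E).symm.toLinearMap)
  refine ⟨r, LinearMap.ext fun φ => ?_⟩
  have hφ : φ = (ringLmapEquivSelf R R E).symm (φ 1) := by ext; simp
  have := LinearMap.congr_fun hr (φ 1)
  rw [bidualityMap_apply, ← mul_one r, ← smul_eq_mul, map_smul, ← lsmul_apply, this,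
    LinearMap.comp_apply, LinearEquiv.coe_coe, ← hφ]

theorem bidualityMap_surjective_of_finite (hE : Module.Injective R E)
    (hs : Function.Surjective (lsmul R E)) [Module.Finite R M] :
    Function.Surjective (bidualityMap R M E) := by
  classical
  obtain ⟨s, hspan⟩ := Module.Finite.fg_top (R := R) (M := M)
  refine bidualityMap_surjective_of_surjective hE
    (bidualityMap_surjective_pi fun _ : s => bidualityMap_ring_surjective hs)
    (Fintype.linearCombination R ((↑) : s → M)) ?_
  rw [← range_eq_top, Fintype.range_linearCombination, Subtype.range_coe, hspan]

theorem bidualityMap_surjective_of_isArtinian (hE : Module.Injective R E)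
    (hc : IsCogenerator R E) (hs : Function.Surjective (lsmul R E)) [IsArtinian R M] :
    Function.Surjective (bidualityMap R M E) := by
  classical
  obtain ⟨s, hj⟩ := exists_injective_pi_of_isArtinian hc (M := M)
  exact bidualityMap_surjective_of_injective hE hc
    (bidualityMap_surjective_pi fun _ : s => bidualityMap_self_surjective hs) _ hj

end InjectiveCogenerator

section LocalRing

variable {R : Type u} [CommRing R] [IsLocalRing R] {E : Type u} [AddCommGroup E] [Module R E]
  {M : Type u} [AddCommGroup M] [Module R M] {f : ResidueField R →ₗ[R] E}

theorem isCogenerator_of_injective (hE : Module.Injective R E) (hf : Function.Injective f) :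
    IsCogenerator R E := by
  intro N _ _ x hx
  set T := LinearMap.toSpanSingleton R N x
  have hTm : ker T ≤ maximalIdeal R :=
    le_maximalIdeal fun h => hx (by simpa [T] using (h ▸ Submodule.mem_top : (1 : R) ∈ ker T))
  -- `R ⧸ ann x ≅ R x ⊆ N`, and `R ⧸ ann x ↠ k ↪ E` extends to `N`
  have hj : Function.Injective ((ker T).liftQ T le_rfl) :=
    LinearMap.ker_eq_bot.mp (Submodule.ker_liftQ_eq_bot _ _ _ le_rfl)
  have hg : ker T ≤ ker (f ∘ₗ Algebra.linearMap R (ResidueField R)) := fun r hr => by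
    simp [(residue_eq_zero_iff r).mpr (hTm hr)]
  obtain ⟨φ, hφ⟩ := hE.out _ hj ((ker T).liftQ _ hg)
  refine ⟨φ, fun h => one_ne_zero (hf ?_)⟩
  have := hφ (Submodule.Quotient.mk 1)
  simp only [Submodule.liftQ_apply, T, toSpanSingleton_apply, one_smul, h] at this
  simpa using this.symm

theorem mem_range_of_forall_smul_eq_zero
    (hess : ∀ N : Submodule R E, N ≠ ⊥ → N ⊓ range f ≠ ⊥) {x : E}
    (hx : ∀ r ∈ maximalIdeal R, r • x = 0) : x ∈ range f := by
  by_cases h0 : x = 0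
  · exact h0 ▸ (range f).zero_mem
  obtain ⟨y, ⟨hyx, c, hc⟩, hy0⟩ :=
    (Submodule.ne_bot_iff _).mp (hess (R ∙ x) (by simpa using h0))
  obtain ⟨s, rfl⟩ := Submodule.mem_span_singleton.mp hyx
  have hs : IsUnit s := by
    by_contra h
    exact hy0 (hx s ((mem_maximalIdeal s).mpr h))
  refine ⟨(↑hs.unit⁻¹ : R) • c, ?_⟩
  rw [map_smul, hc, smul_smul, hs.val_inv_mul, one_smul]

theorem ResidueField.smul_one (r : R) : r • (1 : ResidueField R) = residue R r := by
  rw [Algebra.smul_def, mul_one, ResidueField.algebraMap_eq]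

theorem ResidueField.linearMap_ext {ψ ψ' : ResidueField R →ₗ[R] E} (h : ψ 1 = ψ' 1) :
    ψ = ψ' :=
  LinearMap.ext fun y => by
    obtain ⟨s, rfl⟩ := residue_surjective y
    rw [← ResidueField.smul_one, map_smul, map_smul, h]

theorem ResidueField.smul_linearMap_eq_zero (ψ : ResidueField R →ₗ[R] E) {r : R}
    (hr : r ∈ maximalIdeal R) : r • ψ = 0 :=
  ResidueField.linearMap_ext <| by
    rw [LinearMap.smul_apply, ← map_smul, ResidueField.smul_one,
      (residue_eq_zero_iff r).mpr hr, map_zero, LinearMap.zero_apply]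

theorem exists_eq_smul_of_residueField (hess : ∀ N : Submodule R E, N ≠ ⊥ → N ⊓ range f ≠ ⊥)
    (ψ : ResidueField R →ₗ[R] E) :
    ∃ r : R, ψ = r • f := by
  obtain ⟨c, hc⟩ := mem_range_of_forall_smul_eq_zero hess (x := ψ 1) fun r hr => by
    rw [← LinearMap.smul_apply, ResidueField.smul_linearMap_eq_zero ψ hr, LinearMap.zero_apply]
  obtain ⟨r, rfl⟩ := residue_surjective c
  refine ⟨r, ResidueField.linearMap_ext ?_⟩
  rw [LinearMap.smul_apply, ← map_smul, ResidueField.smul_one, hc]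

theorem bidualityMap_residueField_surjective (hess : ∀ N : Submodule R E, N ≠ ⊥ → N ⊓ range f ≠ ⊥) :
    Function.Surjective (bidualityMap R (ResidueField R) E) := by
  intro F
  obtain ⟨c, hc⟩ := mem_range_of_forall_smul_eq_zero hess (x := F f) fun r hr => by
    rw [← map_smul, ResidueField.smul_linearMap_eq_zero f hr, map_zero]
  refine ⟨c, LinearMap.ext fun ψ => ?_⟩
  obtain ⟨r, rfl⟩ := exists_eq_smul_of_residueField hess ψ
  simp [hc]

theorem bidualityMap_surjective_of_isFiniteLength (hE : Module.Injective R E)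
    (hess : ∀ N : Submodule R E, N ≠ ⊥ → N ⊓ range f ≠ ⊥)
    (hM : IsFiniteLength R M) : Function.Surjective (bidualityMap R M E) := by
  induction hM with
  | of_subsingleton =>
    exact fun F => ⟨0, LinearMap.ext fun φ => by simp [Subsingleton.elim φ 0]⟩
  | @of_simple_quotient M _ _ N _ _ ih =>
    refine bidualityMap_surjective_of_quotient hE N ih ?_
    obtain ⟨I, hI, ⟨e⟩⟩ := isSimpleModule_iff_quot_maximal.mp ‹IsSimpleModule R (M ⧸ N)›
    obtain rfl := IsLocalRing.eq_maximalIdeal hI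
    exact bidualityMap_surjective_of_surjective hE (bidualityMap_residueField_surjective hess)
      e.symm.toLinearMap e.symm.surjective

theorem isFiniteLength_quotient_maximalIdeal_pow [IsNoetherianRing R] (t : ℕ) :
    IsFiniteLength R (R ⧸ maximalIdeal R ^ t) := by
  have : IsArtinianRing (R ⧸ maximalIdeal R ^ t) := by
    rw [isArtinianRing_iff_krullDimLE_zero, Ring.krullDimLE_zero_iff]
    intro J hJ
    apply Ideal.isMaximal_of_isIntegral_of_isMaximal_comap (R := R)
    have hP := hJ.comap (Ideal.Quotient.mk (maximalIdeal R ^ t))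
    have hle : maximalIdeal R ^ t ≤ J.comap (Ideal.Quotient.mk _) := fun x hx => by
      simp [Ideal.Quotient.eq_zero_iff_mem.mpr hx]
    have := (maximalIdeal.isMaximal R).eq_of_le hP.ne_top (hP.le_of_pow_le hle)
    exact this ▸ maximalIdeal.isMaximal R
  refine isFiniteLength_iff_isNoetherian_isArtinian.mpr ⟨isNoetherian_quotient _, ?_⟩
  exact isArtinian_of_surjective_algebraMap (Ideal.Quotient.mk_surjective (I := maximalIdeal R ^ t))

theorem exists_smul_eq_of_torsionBySet (hE : Module.Injective R E)
    (hess : ∀ N : Submodule R E, N ≠ ⊥ → N ⊓ range f ≠ ⊥)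
    {I : Ideal R} (hI : IsFiniteLength R (R ⧸ I)) (φ : Submodule.torsionBySet R E I →ₗ[R] E) :
    ∃ r : R, ∀ x, φ x = r • (x : E) := by
  -- `Hom(R ⧸ I, E)` is identified with the `I`-torsion of `E` by evaluation at `1`
  have hev (ψ : R ⧸ I →ₗ[R] E) :
      bidualityMap R (R ⧸ I) E (Submodule.Quotient.mk 1) ψ ∈ Submodule.torsionBySet R E I :=
    apply_mk_one_mem_torsionBySet ψ
  obtain ⟨q, hq⟩ := bidualityMap_surjective_of_isFiniteLength hE hess hI
    (φ ∘ₗ (bidualityMap R (R ⧸ I) E (Submodule.Quotient.mk 1)).codRestrict _ hev)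
  obtain ⟨r, rfl⟩ := Submodule.Quotient.mk_surjective _ q
  refine ⟨r, fun x => ?_⟩
  have hx : I ≤ ker (toSpanSingleton R E x) := fun a ha =>
    (Submodule.mem_torsionBySet_iff _ _).mp x.2 ⟨a, ha⟩
  set ψ := I.liftQ (toSpanSingleton R E x) hx
  have hψ (s : R) : ψ (Submodule.Quotient.mk s) = s • (x : E) := Submodule.liftQ_apply ..
  calc φ x = φ ((bidualityMap R (R ⧸ I) E (Submodule.Quotient.mk 1)).codRestrict _ hev ψ) :=
        congrArg φ (Subtype.ext ((hψ 1).trans (one_smul R _)).symm)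
    _ = r • x := by rw [← LinearMap.comp_apply, ← hq, bidualityMap_apply, hψ]

theorem range_le_of_ne_bot (hess : ∀ N : Submodule R E, N ≠ ⊥ → N ⊓ range f ≠ ⊥)
    {N : Submodule R E} (hN : N ≠ ⊥) :
    range f ≤ N := by
  obtain ⟨_, ⟨hcN, c, rfl⟩, hc⟩ := (Submodule.ne_bot_iff _).mp (hess N hN)
  have hc0 : c ≠ 0 := by rintro rfl; exact hc (map_zero f)
  rintro _ ⟨c', rfl⟩
  obtain ⟨s, hs⟩ := residue_surjective (c' * c⁻¹)
  have : s • c = c' := by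
    rw [Algebra.smul_def, ResidueField.algebraMap_eq, hs, mul_assoc, inv_mul_cancel₀ hc0,
      mul_one]
  rw [← this, map_smul]
  exact N.smul_mem s hcN

theorem exists_mem_torsionBySet_pow [IsNoetherianRing R]
    (hf : Function.Injective f) (hess : ∀ N : Submodule R E, N ≠ ⊥ → N ⊓ range f ≠ ⊥) (x : E) :
    ∃ t : ℕ, x ∈ Submodule.torsionBySet R E ↑(maximalIdeal R ^ t) := by
  by_contra! h
  -- otherwise `f 1` lies in every `𝔪 ^ t • R x`, against Krull's intersection theorem
  have hmem (t : ℕ) : ∃ a ∈ maximalIdeal R ^ t, a • x = f 1 := by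
    obtain ⟨⟨a, ha⟩, hax⟩ : ∃ a : ↥(maximalIdeal R ^ t), (a : R) • x ≠ 0 := by
      simpa [Submodule.mem_torsionBySet_iff] using h t
    have hne : maximalIdeal R ^ t • (R ∙ x) ≠ ⊥ := (Submodule.ne_bot_iff _).mpr
      ⟨a • x, Submodule.smul_mem_smul ha (Submodule.mem_span_singleton_self x), hax⟩
    exact Submodule.mem_smul_span_singleton.mp (range_le_of_ne_bot hess hne ⟨1, rfl⟩)
  choose a ha hax using hmem
  set y : R ∙ x := a 0 • ⟨x, Submodule.mem_span_singleton_self x⟩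
  have hy (t : ℕ) : y = a t • ⟨x, Submodule.mem_span_singleton_self x⟩ :=
    Subtype.ext ((hax 0).trans (hax t).symm)
  have hy0 : y = 0 := IsHausdorff.haus inferInstance y fun t => SModEq.zero.mpr <| by
    rw [hy t]
    exact Submodule.smul_mem_smul (ha t) Submodule.mem_top
  have hf1 : f 1 = f 0 := ((hax 0).symm.trans (congrArg Subtype.val hy0)).trans (map_zero f).symm
  exact one_ne_zero (hf hf1)

theorem lsmul_surjective_of_isAdicComplete [IsNoetherianRing R]
    [IsAdicComplete (maximalIdeal R) R] (hE : Module.Injective R E) (hf : Function.Injective f)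
    (hess : ∀ N : Submodule R E, N ≠ ⊥ → N ⊓ range f ≠ ⊥) :
    Function.Surjective (lsmul R E) := by
  intro g
  let Et (t : ℕ) := Submodule.torsionBySet R E ↑(maximalIdeal R ^ t)
  choose r hr using fun t => exists_smul_eq_of_torsionBySet hE hess
    (isFiniteLength_quotient_maximalIdeal_pow t) (g ∘ₗ (Et t).subtype)
  replace hr (t : ℕ) (x : E) (hx : x ∈ Et t) : g x = r t • x := hr t ⟨x, hx⟩
  have hc := isCogenerator_of_injective hE hf
  -- `r t` is determined modulo `𝔪 ^ t`, so the `r t` form a Cauchy sequence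
  have hcauchy {s t : ℕ} (hst : s ≤ t) :
      r s ≡ r t [SMOD maximalIdeal R ^ s • (⊤ : Ideal R)] := by
    rw [SModEq.sub_mem, smul_eq_mul, Ideal.mul_top]
    refine annihilator_torsionBySet_le hc _ (Submodule.mem_annihilator.mpr fun x hx => ?_)
    have hxt : x ∈ Et t := Submodule.torsionBySet_le_torsionBySet_pow _ _ hst _ hx
    rw [sub_smul, ← hr s x hx, ← hr t x hxt, sub_self]
  obtain ⟨r₀, hr₀⟩ := IsPrecomplete.prec inferInstance hcauchy
  refine ⟨r₀, LinearMap.ext fun x => ?_⟩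
  obtain ⟨t, hxt⟩ := exists_mem_torsionBySet_pow hf hess x
  have hrt := hr₀ t
  rw [SModEq.sub_mem, smul_eq_mul, Ideal.mul_top] at hrt
  have := (Submodule.mem_torsionBySet_iff _ _).mp hxt ⟨_, hrt⟩
  rw [sub_smul, sub_eq_zero] at this
  rw [lsmul_apply, ← this]
  exact (hr t x hxt).symm

end LocalRing

/-- **Matlis duality.** Let `(R, 𝔪, k)` be a commutative noetherian local ring which is
`𝔪`-adically complete and let `E` be an injective hull of `k = R/𝔪` over `R` (an injective
module together with an injective linear map `k → E` with essential image).  Then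
`Hom_R(−, E)` sends finitely generated modules to Artinian modules and Artinian modules to
finitely generated modules, and for every module `M` which is finitely generated or
Artinian the canonical map `M → Hom_R(Hom_R(M, E), E)` is an isomorphism; hence
`Hom_R(−, E)` is a duality between finitely generated and Artinian `R`-modules. -/
theorem stmt13 (R : Type u) [CommRing R] [IsNoetherianRing R] [IsLocalRing R]
    [IsAdicComplete (IsLocalRing.maximalIdeal R) R]
    (E : Type u) [AddCommGroup E] [Module R E] (hE : Module.Injective R E)
    (f : IsLocalRing.ResidueField R →ₗ[R] E) (hf : Function.Injective f)
    (hess : ∀ N : Submodule R E, N ≠ ⊥ → N ⊓ LinearMap.range f ≠ ⊥) :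
    (∀ (M : Type u) [AddCommGroup M] [Module R M],
      Module.Finite R M → IsArtinian R (M →ₗ[R] E)) ∧
    (∀ (N : Type u) [AddCommGroup N] [Module R N],
      IsArtinian R N → Module.Finite R (N →ₗ[R] E)) ∧
    (∀ (M : Type u) [AddCommGroup M] [Module R M],
      (Module.Finite R M ∨ IsArtinian R M) →
        Function.Bijective (bidualityMap R M E)) := by
  have hc := isCogenerator_of_injective hE hf
  have hs := lsmul_surjective_of_isAdicComplete hE hf hess
  have : IsArtinian R E := isArtinian_of_lsmul_surjective hc hs
  refine ⟨fun M _ _ _ => isArtinian_linearMap_of_finite,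
    fun N _ _ _ => finite_linearMap_of_isArtinian hE hc hs,
    fun M _ _ hM => ⟨bidualityMap_injective hc, ?_⟩⟩
  rcases hM with hM | hM
  · exact bidualityMap_surjective_of_finite hE hs
  · exact bidualityMap_surjective_of_isArtinian hE hc hs
end
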